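/- Let Σ₁, Σ₂ be d×d symmetric positive definite matrices and set Y = Σ₁^{1/2}(Σ₁^{1/2} Σ₂ Σ₁^{1/2})^{1/2} Σ₁^{-1/2}. Then the 2d×2d block matrix [[Σ₁, Y],[Yᵀ, Σ₂]] is positive semidefinite, and Tr(Y) = Tr((Σ₁^{1/2} Σ₂ Σ₁^{1/2})^{1/2}). -/

import Mathlib

open Matrix BigOperators

open scoped MatrixOrder Matrix.Norms.L2Operator in
open Classical in
noncomputable def sqrtm {d : ℕ} (A : Matrix (Fin d) (Fin d) ℝ) : Matrix (Fin d) (Fin d) ℝ :=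
  if h : A.PosSemidef then CFC.sqrt A else 0

/-- The spectral norm (ℓ²-operator norm) of a real matrix. -/
noncomputable def specNorm {d : ℕ} (M : Matrix (Fin d) (Fin d) ℝ) : ℝ :=
  ‖LinearMap.toContinuousLinearMap (Matrix.toEuclideanLin M)‖

/-!
With `S = Σ₁^{1/2}` and `T = (S Σ₂ S)^{1/2}`, the block matrix is the Gram matrix `Bᴴ B` of the
row `B = [S, T S⁻¹]`: indeed `Sᴴ S = Σ₁`, `Sᴴ (T S⁻¹) = Y`, and
`(T S⁻¹)ᴴ (T S⁻¹) = S⁻¹ T² S⁻¹ = Σ₂`. The trace identity is invariance of the trace under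
conjugation by `S`.
-/

open scoped MatrixOrder

namespace Matrix

theorem posSemidef_fromBlocks_conjTranspose_mul {m n₁ n₂ R : Type*} [Fintype m] [Fintype n₁]
    [Fintype n₂] [CommRing R] [PartialOrder R] [StarRing R] [StarOrderedRing R]
    (A : Matrix m n₁ R) (B : Matrix m n₂ R) :
    (fromBlocks (Aᴴ * A) (Aᴴ * B) (Bᴴ * A) (Bᴴ * B)).PosSemidef := by
  rw [← fromRows_mul_fromCols, ← conjTranspose_fromCols_eq_fromRows_conjTranspose]
  exact posSemidef_conjTranspose_mul_self _

theorem posSemidef_fromBlocks_conj {n R : Type*} [Fintype n] [DecidableEq n] [CommRing R]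
    [PartialOrder R] [StarRing R] [StarOrderedRing R] {S T U V : Matrix n n R}
    (hS : S.IsHermitian) (hSu : IsUnit S) (hT : T.IsHermitian)
    (hSS : S * S = U) (hTT : T * T = S * V * S) :
    (fromBlocks U (S * T * S⁻¹) (S * T * S⁻¹)ᴴ V).PosSemidef := by
  have hSinv : (S⁻¹)ᴴ = S⁻¹ := by rw [conjTranspose_nonsing_inv, hS.eq]
  have hdet : IsUnit S.det := (isUnit_iff_isUnit_det S).mp hSu
  have hV : (T * S⁻¹)ᴴ * (T * S⁻¹) = V := by
    calc (T * S⁻¹)ᴴ * (T * S⁻¹) = S⁻¹ * (T * T) * S⁻¹ := by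
          simp only [conjTranspose_mul, hSinv, hT.eq, Matrix.mul_assoc]
      _ = (S⁻¹ * S) * V * (S * S⁻¹) := by rw [hTT]; simp only [Matrix.mul_assoc]
      _ = V := by rw [nonsing_inv_mul S hdet, mul_nonsing_inv S hdet, Matrix.one_mul,
                    Matrix.mul_one]
  have hY : (S * T * S⁻¹)ᴴ = (T * S⁻¹)ᴴ * S := by
    simp only [conjTranspose_mul, hS.eq, Matrix.mul_assoc]
  rw [← hSS, ← hV, hY, Matrix.mul_assoc]
  simpa only [hS.eq] using posSemidef_fromBlocks_conjTranspose_mul S (T * S⁻¹)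

end Matrix

theorem sqrtm_of_posSemidef {d : ℕ} {A : Matrix (Fin d) (Fin d) ℝ} (hA : A.PosSemidef) :
    sqrtm A = CFC.sqrt A :=
  dif_pos hA

theorem posSemidef_sqrtm {d : ℕ} (A : Matrix (Fin d) (Fin d) ℝ) : (sqrtm A).PosSemidef := by
  by_cases hA : A.PosSemidef
  · rw [sqrtm_of_posSemidef hA]
    exact nonneg_iff_posSemidef.mp (CFC.sqrt_nonneg A)
  · rw [sqrtm, dif_neg hA]
    exact PosSemidef.zero

theorem sqrtm_mul_sqrtm {d : ℕ} {A : Matrix (Fin d) (Fin d) ℝ} (hA : A.PosSemidef) :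
    sqrtm A * sqrtm A = A := by
  rw [sqrtm_of_posSemidef hA]
  exact CFC.sqrt_mul_sqrt_self A (nonneg_iff_posSemidef.mpr hA)

theorem isUnit_sqrtm {d : ℕ} {A : Matrix (Fin d) (Fin d) ℝ} (hA : A.PosDef) :
    IsUnit (sqrtm A) :=
  isUnit_of_mul_isUnit_left ((sqrtm_mul_sqrtm hA.posSemidef).symm ▸ hA.isUnit)

theorem stmt7 {d : ℕ} (V₁ V₂ : Matrix (Fin d) (Fin d) ℝ)
    (h1 : V₁.PosDef) (h2 : V₂.PosDef) :
    (Matrix.fromBlocks V₁ (sqrtm V₁ * sqrtm (sqrtm V₁ * V₂ * sqrtm V₁) * (sqrtm V₁)⁻¹)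
      (sqrtm V₁ * sqrtm (sqrtm V₁ * V₂ * sqrtm V₁) * (sqrtm V₁)⁻¹)ᵀ V₂).PosSemidef ∧
    (sqrtm V₁ * sqrtm (sqrtm V₁ * V₂ * sqrtm V₁) * (sqrtm V₁)⁻¹).trace =
      (sqrtm (sqrtm V₁ * V₂ * sqrtm V₁)).trace := by
  set S := sqrtm V₁
  set T := sqrtm (S * V₂ * S)
  have hS : S.IsHermitian := (posSemidef_sqrtm V₁).isHermitian
  have hSu : IsUnit S := isUnit_sqrtm h1
  have hSV₂S : (S * V₂ * S).PosSemidef := by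
    simpa only [hS.eq] using h2.posSemidef.conjTranspose_mul_mul_same S
  refine ⟨?_, trace_conj hSu T⟩
  rw [← conjTranspose_eq_transpose_of_trivial]
  exact posSemidef_fromBlocks_conj hS hSu (posSemidef_sqrtm _).isHermitian
    (sqrtm_mul_sqrtm h1.posSemidef) (sqrtm_mul_sqrtm hSV₂S)
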